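/- arXiv:2402.16186 — 6 statements merged into one kernel-verified Lean document; each statement's English description precedes it below -/
import Mathlib

section
/- Suppose v, s ∈ ℝ^{2n} have all components positive, τ > 0, and (Δz, Δv, Δs) is a Newton direction at (v, s, τ), i.e. it satisfies 2λH̃Δz + ΩΔv = 0, ΩᵀΔz + Δs = 0, and √(s/v)Δv + √(v/s)Δs = 2(τe − √(vs)). If the proximity measure satisfies ξ(√(vs), τ) = ‖τe − √(vs)‖/τ < 1, then the full Newton step is strictly feasible: every component of v + Δv is positive and every component of s + Δs is positive. -/
open Finset Matrix Real

/-!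
Scale the direction to `p = √(s/v) Δv`, `q = √(v/s) Δs`, so that `p + q = 2(τe − β)` and
`p q = Δv Δs` componentwise. The first two Newton equations give
`Δvᵀ Δs = 2λ Δzᵀ H̃ Δz ≥ 0`, hence `(pᵢ − qᵢ)² ≤ ‖p − q‖² ≤ ‖p + q‖² = 4‖τe − β‖² < (2τ)²`.
Since `v + Δv = √(v/s) (β + p)` and `s + Δs = √(s/v) (β + q)`, it remains to see that
`β + p` and `β + q` are positive: componentwise they sum to `2τ > 0`, and their product is
`τ² − ((pᵢ − qᵢ)/2)² > 0`.
-/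

/-- Euclidean norm of a real vector. -/
noncomputable def enorm {m : Type*} [Fintype m] (x : m → ℝ) : ℝ :=
  Real.sqrt (∑ i, (x i) ^ 2)

/-- The matrix Ω = [I, −I] ∈ ℝ^{n × 2n}. -/
noncomputable def Omega (n : ℕ) : Matrix (Fin n) (Fin n ⊕ Fin n) ℝ :=
  Matrix.fromCols (1 : Matrix (Fin n) (Fin n) ℝ) (-(1 : Matrix (Fin n) (Fin n) ℝ))

theorem dotProduct_nonneg_of_psd_saddle {m k : Type*} [Fintype m] [Fintype k]
    {H : Matrix m m ℝ} (hH : H.PosSemidef) {c : ℝ} (hc : 0 ≤ c) {A : Matrix m k ℝ}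
    {x : m → ℝ} {y w : k → ℝ} (h₁ : c • H *ᵥ x + A *ᵥ y = 0) (h₂ : Aᵀ *ᵥ x + w = 0) :
    0 ≤ y ⬝ᵥ w := by
  have hw : w = -(Aᵀ *ᵥ x) := eq_neg_of_add_eq_zero_right h₂
  have hAy : A *ᵥ y = -(c • H *ᵥ x) := eq_neg_of_add_eq_zero_right h₁
  have hx : 0 ≤ x ⬝ᵥ H *ᵥ x := by simpa using hH.dotProduct_mulVec_nonneg x
  calc 0 ≤ c * (x ⬝ᵥ H *ᵥ x) := mul_nonneg hc hx
    _ = y ⬝ᵥ w := by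
      rw [hw, dotProduct_neg, dotProduct_mulVec y, vecMul_transpose, hAy, neg_dotProduct,
        smul_dotProduct, dotProduct_comm, neg_neg, smul_eq_mul]

theorem pos_and_pos_of_sq_sub_lt_sq_add {a b : ℝ} (hab : 0 < a + b)
    (h : (a - b) ^ 2 < (a + b) ^ 2) : 0 < a ∧ 0 < b := by
  have hmul : 0 < a * b := by nlinarith
  constructor <;> nlinarith [mul_pos_iff.mp hmul]

theorem sq_sub_le_sum_sq_add {ι : Type*} [Fintype ι] {p q : ι → ℝ}
    (hpq : 0 ≤ ∑ j, p j * q j) (i : ι) : (p i - q i) ^ 2 ≤ ∑ j, (p j + q j) ^ 2 :=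
  calc (p i - q i) ^ 2 ≤ ∑ j, (p j - q j) ^ 2 :=
        single_le_sum (f := fun j => (p j - q j) ^ 2) (fun j _ => sq_nonneg _) (mem_univ i)
    _ ≤ ∑ j, (p j - q j) ^ 2 + 4 * ∑ j, p j * q j := by linarith
    _ = ∑ j, (p j + q j) ^ 2 := by
      rw [mul_sum, ← sum_add_distrib]
      exact sum_congr rfl fun j _ => by ring

theorem sum_sq_lt_sq_of_enorm_div_lt_one {ι : Type*} [Fintype ι] {x : ι → ℝ} {τ : ℝ}
    (hτ : 0 < τ) (h : _root_.enorm x / τ < 1) : ∑ i, x i ^ 2 < τ ^ 2 := by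
  rw [div_lt_one hτ, _root_.enorm] at h
  exact (Real.sqrt_lt' hτ).mp h

theorem sqrt_div_mul_sqrt_div {a b : ℝ} (ha : 0 < a) (hb : 0 < b) :
    √(a / b) * √(b / a) = 1 := by
  rw [← Real.sqrt_mul (div_pos ha hb).le, div_mul_div_cancel₀ hb.ne', div_self ha.ne',
    Real.sqrt_one]

theorem sqrt_div_mul_sqrt_mul {a b : ℝ} (ha : 0 ≤ a) (hb : 0 < b) :
    √(a / b) * √(a * b) = a := by
  rw [← Real.sqrt_mul (div_nonneg ha hb.le), div_mul_eq_mul_div, ← mul_assoc,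
    mul_div_cancel_right₀ _ hb.ne', Real.sqrt_mul_self ha]

theorem add_pos_of_scaled_newton_eq {a b τ da db : ℝ} (ha : 0 < a) (hb : 0 < b) (hτ : 0 < τ)
    (heq : √(b / a) * da + √(a / b) * db = 2 * (τ - √(a * b)))
    (hgap : (√(b / a) * da - √(a / b) * db) ^ 2 < (2 * τ) ^ 2) :
    0 < a + da ∧ 0 < b + db := by
  have hva : a + da = √(a / b) * (√(a * b) + √(b / a) * da) := by
    rw [mul_add, sqrt_div_mul_sqrt_mul ha.le hb, ← mul_assoc, sqrt_div_mul_sqrt_div ha hb,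
      one_mul]
  have hvb : b + db = √(b / a) * (√(a * b) + √(a / b) * db) := by
    rw [mul_add, mul_comm a b, sqrt_div_mul_sqrt_mul hb.le ha, ← mul_assoc,
      sqrt_div_mul_sqrt_div hb ha, one_mul]
  obtain ⟨hpa, hpb⟩ := pos_and_pos_of_sq_sub_lt_sq_add (a := √(a * b) + √(b / a) * da)
    (b := √(a * b) + √(a / b) * db) (by linarith) (by convert hgap using 2 <;> linarith)
  rw [hva, hvb]
  exact ⟨mul_pos (Real.sqrt_pos.2 (div_pos ha hb)) hpa,
    mul_pos (Real.sqrt_pos.2 (div_pos hb ha)) hpb⟩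

theorem full_newton_step_strictly_feasible_general
    (n : ℕ)
    (Htil : Matrix (Fin n) (Fin n) ℝ) (hH : Htil.PosSemidef)
    (lam : ℝ) (hlam : 0 < lam)
    (v s : Fin n ⊕ Fin n → ℝ) (hv : ∀ i, 0 < v i) (hs : ∀ i, 0 < s i)
    (τ : ℝ) (hτ : 0 < τ)
    (Δz : Fin n → ℝ) (Δv Δs : Fin n ⊕ Fin n → ℝ)
    (heq1 : (2 * lam) • Htil.mulVec Δz + (Omega n).mulVec Δv = 0)
    (heq2 : (Omega n)ᵀ.mulVec Δz + Δs = 0)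
    (heq3 : ∀ i, Real.sqrt (s i / v i) * Δv i + Real.sqrt (v i / s i) * Δs i
              = 2 * (τ - Real.sqrt (v i * s i)))
    (hxi : _root_.enorm (fun i => τ - Real.sqrt (v i * s i)) / τ < 1) :
    (∀ i, 0 < v i + Δv i) ∧ (∀ i, 0 < s i + Δs i) := by
  set p := fun i => √(s i / v i) * Δv i
  set q := fun i => √(v i / s i) * Δs i
  have hpq : ∀ i, p i * q i = Δv i * Δs i := fun i =>
    calc p i * q i = √(s i / v i) * √(v i / s i) * (Δv i * Δs i) := by ring
      _ = Δv i * Δs i := by rw [sqrt_div_mul_sqrt_div (hs i) (hv i), one_mul]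
  have hdot : 0 ≤ ∑ i, p i * q i := by
    simp only [hpq]
    exact dotProduct_nonneg_of_psd_saddle hH (by positivity) heq1 heq2
  have hgap : ∀ i, (p i - q i) ^ 2 < (2 * τ) ^ 2 := fun i =>
    calc (p i - q i) ^ 2 ≤ ∑ j, (p j + q j) ^ 2 := sq_sub_le_sum_sq_add hdot i
      _ = 2 ^ 2 * ∑ j, (τ - √(v j * s j)) ^ 2 := by
        rw [mul_sum]
        exact sum_congr rfl fun j _ => by rw [heq3 j]; ring
      _ < 2 ^ 2 * τ ^ 2 := by
        gcongr
        exact sum_sq_lt_sq_of_enorm_div_lt_one hτ hxi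
      _ = (2 * τ) ^ 2 := by ring
  have hstep := fun i => add_pos_of_scaled_newton_eq (hv i) (hs i) hτ (heq3 i) (hgap i)
  exact ⟨fun i => (hstep i).1, fun i => (hstep i).2⟩

/-- Strict feasibility of the full Newton step (Lemma 3). -/
theorem full_newton_step_strictly_feasible
    (n : ℕ) (hn : 1 ≤ n)
    (Htil : Matrix (Fin n) (Fin n) ℝ) (hH : Htil.PosSemidef)
    (lam : ℝ) (hlam : 0 < lam)
    (v s : Fin n ⊕ Fin n → ℝ) (hv : ∀ i, 0 < v i) (hs : ∀ i, 0 < s i)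
    (τ : ℝ) (hτ : 0 < τ)
    (Δz : Fin n → ℝ) (Δv Δs : Fin n ⊕ Fin n → ℝ)
    (heq1 : (2 * lam) • Htil.mulVec Δz + (Omega n).mulVec Δv = 0)
    (heq2 : (Omega n)ᵀ.mulVec Δz + Δs = 0)
    (heq3 : ∀ i, Real.sqrt (s i / v i) * Δv i + Real.sqrt (v i / s i) * Δs i
              = 2 * (τ - Real.sqrt (v i * s i)))
    (hxi : _root_.enorm (fun i => τ - Real.sqrt (v i * s i)) / τ < 1) :
    (∀ i, 0 < v i + Δv i) ∧ (∀ i, 0 < s i + Δs i) :=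
  full_newton_step_strictly_feasible_general n Htil hH lam hlam v s hv hs τ hτ Δz Δv Δs heq1 heq2
    heq3 hxi
end

section
/- Suppose v, s ∈ ℝ^{2n} have all components positive, τ > 0, and (Δz, Δv, Δs) is a Newton direction at (v, s, τ), i.e. it satisfies 2λH̃Δz + ΩΔv = 0, ΩᵀΔz + Δs = 0, and √(s/v)Δv + √(v/s)Δs = 2(τe − √(vs)). Then after the full Newton step v₊ = v + Δv, s₊ = s + Δs, the duality gap satisfies v₊ᵀ s₊ ≤ (2n) τ². -/
/-!
In the scaled variables a = √(s/v) Δv, b = √(v/s) Δs the step factors componentwise as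
(v + Δv)(s + Δs) = (√(vs) + a)(√(vs) + b), and the Newton equation says that the two factors
sum to 2τ. By AM-GM each product is at most τ², and there are 2n components.
-/

open Finset Matrix Real

lemma mul_le_sq_of_add_eq_two_mul {a b t : ℝ} (h : a + b = 2 * t) : a * b ≤ t ^ 2 := by
  have amgm := four_mul_le_sq_add a b
  rw [h] at amgm
  linarith

lemma add_mul_add_eq_scaled {p q : ℝ} (hp : 0 < p) (hq : 0 < q) (x y : ℝ) :
    (p + x) * (q + y) = (√(p * q) + √(q / p) * x) * (√(p * q) + √(p / q) * y) := by
  rw [sqrt_mul hp.le, sqrt_div' _ hp.le, sqrt_div' _ hq.le]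
  conv_lhs => rw [← sq_sqrt hp.le, ← sq_sqrt hq.le]
  field_simp

lemma add_mul_add_le_sq_of_newton {p q τ x y : ℝ} (hp : 0 < p) (hq : 0 < q)
    (h : √(q / p) * x + √(p / q) * y = 2 * (τ - √(p * q))) :
    (p + x) * (q + y) ≤ τ ^ 2 := by
  rw [add_mul_add_eq_scaled hp hq]
  exact mul_le_sq_of_add_eq_two_mul (by linarith)

theorem duality_gap_after_full_newton_step_general
    (n : ℕ)
    (v s : Fin n ⊕ Fin n → ℝ) (hv : ∀ i, 0 < v i) (hs : ∀ i, 0 < s i)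
    (τ : ℝ)
    (Δv Δs : Fin n ⊕ Fin n → ℝ)
    (heq3 : ∀ i, Real.sqrt (s i / v i) * Δv i + Real.sqrt (v i / s i) * Δs i
              = 2 * (τ - Real.sqrt (v i * s i))) :
    ∑ i, (v i + Δv i) * (s i + Δs i) ≤ (2 * n) * τ ^ 2 := by
  calc ∑ i, (v i + Δv i) * (s i + Δs i)
      ≤ ∑ _i : Fin n ⊕ Fin n, τ ^ 2 :=
        sum_le_sum fun i _ => add_mul_add_le_sq_of_newton (hv i) (hs i) (heq3 i)
    _ = (2 * n) * τ ^ 2 := by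
        rw [sum_const, card_univ, Fintype.card_sum, Fintype.card_fin, nsmul_eq_mul]
        push_cast
        ring

/-- Duality gap after a full Newton step (Lemma 4): v₊ᵀ s₊ ≤ (2n) τ². -/
theorem duality_gap_after_full_newton_step
    (n : ℕ) (hn : 1 ≤ n)
    (Htil : Matrix (Fin n) (Fin n) ℝ) (hH : Htil.PosSemidef)
    (lam : ℝ) (hlam : 0 < lam)
    (v s : Fin n ⊕ Fin n → ℝ) (hv : ∀ i, 0 < v i) (hs : ∀ i, 0 < s i)
    (τ : ℝ) (hτ : 0 < τ)
    (Δz : Fin n → ℝ) (Δv Δs : Fin n ⊕ Fin n → ℝ)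
    (heq1 : (2 * lam) • Htil.mulVec Δz + (Omega n).mulVec Δv = 0)
    (heq2 : (Omega n)ᵀ.mulVec Δz + Δs = 0)
    (heq3 : ∀ i, Real.sqrt (s i / v i) * Δv i + Real.sqrt (v i / s i) * Δs i
              = 2 * (τ - Real.sqrt (v i * s i))) :
    ∑ i, (v i + Δv i) * (s i + Δs i) ≤ (2 * n) * τ ^ 2 :=
  duality_gap_after_full_newton_step_general n v s hv hs τ Δv Δs heq3
end

section
/- Suppose v, s ∈ ℝ^{2n} have all components positive, τ > 0, and (Δz, Δv, Δs) is a Newton direction at (v, s, τ). Let v₊ = v + Δv, s₊ = s + Δs, β₊ = √(v₊s₊), and let τ₊ = (1 − η)τ with 0 < η < 1. If ξ := ξ(√(vs), τ) < 1, then the updated proximity measure satisfies ξ(β₊, τ₊) ≤ ξ²/(1 + √(1 − ξ²)) + η√(2n)/(1 − η). -/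
/-!
In the scaled directions `dᵥ = √(s/v) Δv`, `dₛ = √(v/s) Δs` the third Newton equation reads
`dᵥ + dₛ = 2 (τ e - β)`, and then `v₊ s₊ = τ² e - M²` with `M = (dᵥ - dₛ) / 2`.
The first two equations give `Δv ⬝ Δs = 2λ Δzᵀ H̃ Δz ≥ 0`, so
`‖M‖² = ‖τ e - β‖² - Δv ⬝ Δs ≤ ξ² τ²`. Componentwise
`τ - √(τ² - Mᵢ²) = Mᵢ² / (τ + √(τ² - Mᵢ²)) ≤ Mᵢ² / (τ (1 + √(1 - ξ²)))`, whence
`‖τ e - β₊‖ ≤ τ ξ² / (1 + √(1 - ξ²))`. Finally `(1 - η) τ e - β₊ = (1 - η) (τ e - β₊) - η β₊`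
with `0 ≤ β₊ ≤ τ e`, and the triangle inequality contributes the term `η τ √(2n)`.
-/

open Finset Matrix Real

section EuclideanNorm

variable {m : Type*} [Fintype m]

theorem enorm_eq_norm_toLp (x : m → ℝ) : _root_.enorm x = ‖WithLp.toLp 2 x‖ := by
  simp [_root_.enorm, EuclideanSpace.norm_eq]

theorem sq_enorm (x : m → ℝ) : _root_.enorm x ^ 2 = ∑ i, x i ^ 2 :=
  sq_sqrt (sum_nonneg fun _ _ => sq_nonneg _)

theorem enorm_le_sum_abs (x : m → ℝ) : _root_.enorm x ≤ ∑ i, |x i| := by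
  have h : ∑ i, |x i| ^ 2 ≤ (∑ i, |x i|) ^ 2 :=
    sum_sq_le_sq_sum_of_nonneg fun i _ => abs_nonneg _
  simp only [sq_abs] at h
  exact (sqrt_le_sqrt h).trans_eq (sqrt_sq (sum_nonneg fun i _ => abs_nonneg _))

theorem enorm_le_mul_sqrt_card {x : m → ℝ} {c : ℝ} (h : ∀ i, |x i| ≤ c) :
    _root_.enorm x ≤ c * √(Fintype.card m) := by
  obtain _ | ⟨⟨i⟩⟩ := isEmpty_or_nonempty m
  · simp [_root_.enorm]
  have hc : 0 ≤ c := (abs_nonneg _).trans (h i)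
  calc _root_.enorm x ≤ √(∑ _i : m, c ^ 2) :=
        sqrt_le_sqrt (sum_le_sum fun j _ => sq_le_sq' (abs_le.1 (h j)).1 (abs_le.1 (h j)).2)
    _ = c * √(Fintype.card m) := by
        rw [sum_const, card_univ, nsmul_eq_mul, sqrt_mul (Nat.cast_nonneg _), sqrt_sq hc,
          mul_comm]

theorem enorm_one_sub_mul_sub_le {β : m → ℝ} {τ η : ℝ} (hβ : ∀ i, 0 ≤ β i ∧ β i ≤ τ)
    (hη0 : 0 ≤ η) (hη1 : η ≤ 1) :
    _root_.enorm (fun i => (1 - η) * τ - β i)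
      ≤ (1 - η) * _root_.enorm (fun i => τ - β i) + η * (τ * √(Fintype.card m)) := by
  have hsplit : WithLp.toLp 2 (fun i => (1 - η) * τ - β i)
      = (1 - η) • WithLp.toLp 2 (fun i => τ - β i) - η • WithLp.toLp 2 β := by
    ext i; simp; ring
  have hβτ : _root_.enorm β ≤ τ * √(Fintype.card m) :=
    enorm_le_mul_sqrt_card fun i => abs_le.2 ⟨by linarith [hβ i], (hβ i).2⟩
  rw [enorm_eq_norm_toLp] at hβτ ⊢
  rw [enorm_eq_norm_toLp, hsplit]
  calc _ ≤ ‖(1 - η) • WithLp.toLp 2 (fun i => τ - β i)‖ + ‖η • WithLp.toLp 2 β‖ :=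
        norm_sub_le _ _
    _ ≤ _ := by
        rw [norm_smul, norm_smul, norm_of_nonneg (by linarith), norm_of_nonneg hη0]
        gcongr

end EuclideanNorm

theorem sub_sqrt_sq_sub_sq_le {τ ξ a : ℝ} (hτ : 0 < τ) (hξ : ξ ^ 2 ≤ 1)
    (ha : a ^ 2 ≤ ξ ^ 2 * τ ^ 2) :
    τ - √(τ ^ 2 - a ^ 2) ≤ a ^ 2 / (τ * (1 + √(1 - ξ ^ 2))) := by
  set c := √(1 - ξ ^ 2)
  have hc0 : 0 ≤ c := sqrt_nonneg _
  have hc2 : c ^ 2 = 1 - ξ ^ 2 := sq_sqrt (by linarith)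
  have hτc : (τ * c) ^ 2 ≤ τ ^ 2 - a ^ 2 := by rw [mul_pow, hc2]; linarith
  set b := √(τ ^ 2 - a ^ 2)
  have hb2 : b ^ 2 = τ ^ 2 - a ^ 2 := sq_sqrt ((sq_nonneg _).trans hτc)
  have hcb : τ * c ≤ b := le_sqrt_of_sq_le hτc
  have hbτ : b ≤ τ := (sqrt_le_sqrt (by nlinarith)).trans_eq (sqrt_sq hτ.le)
  -- `(τ - b) (τ + b) = a²`, and `τ + b ≥ τ (1 + c)`
  rw [le_div_iff₀ (by positivity)]
  nlinarith [mul_le_mul_of_nonneg_left hcb (sub_nonneg.2 hbτ)]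

section ProximityBound

variable {m : Type*} [Fintype m]

theorem enorm_sub_sqrt_sq_sub_sq_le {M : m → ℝ} {τ ξ : ℝ} (hτ : 0 < τ) (hξ : ξ ^ 2 ≤ 1)
    (hM : ∑ i, M i ^ 2 ≤ ξ ^ 2 * τ ^ 2) :
    _root_.enorm (fun i => τ - √(τ ^ 2 - M i ^ 2)) ≤ τ * (ξ ^ 2 / (1 + √(1 - ξ ^ 2))) := by
  have hd : 0 < τ * (1 + √(1 - ξ ^ 2)) := by positivity
  have hMi : ∀ i, M i ^ 2 ≤ ξ ^ 2 * τ ^ 2 := fun i =>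
    (single_le_sum (f := fun j => M j ^ 2) (fun j _ => sq_nonneg _) (mem_univ i)).trans hM
  have hnonneg : ∀ i, 0 ≤ τ - √(τ ^ 2 - M i ^ 2) := fun i =>
    sub_nonneg.2 ((sqrt_le_sqrt (by nlinarith)).trans_eq (sqrt_sq hτ.le))
  calc _ ≤ ∑ i, |τ - √(τ ^ 2 - M i ^ 2)| := enorm_le_sum_abs _
    _ ≤ ∑ i, M i ^ 2 / (τ * (1 + √(1 - ξ ^ 2))) := sum_le_sum fun i _ => by
        rw [abs_of_nonneg (hnonneg i)]; exact sub_sqrt_sq_sub_sq_le hτ hξ (hMi i)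
    _ ≤ ξ ^ 2 * τ ^ 2 / (τ * (1 + √(1 - ξ ^ 2))) := by
        rw [← sum_div]; exact div_le_div_of_nonneg_right hM hd.le
    _ = τ * (ξ ^ 2 / (1 + √(1 - ξ ^ 2))) := by field_simp

theorem proximity_le_of_sum_sq_le {M : m → ℝ} {τ η ξ : ℝ} (hτ : 0 < τ) (hη0 : 0 ≤ η)
    (hη1 : η < 1) (hξ : ξ ^ 2 ≤ 1) (hM : ∑ i, M i ^ 2 ≤ ξ ^ 2 * τ ^ 2) :
    _root_.enorm (fun i => (1 - η) * τ - √(τ ^ 2 - M i ^ 2)) / ((1 - η) * τ)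
      ≤ ξ ^ 2 / (1 + √(1 - ξ ^ 2)) + η * √(Fintype.card m) / (1 - η) := by
  have h1η : 0 < 1 - η := sub_pos.2 hη1
  have hβ : ∀ i, 0 ≤ √(τ ^ 2 - M i ^ 2) ∧ √(τ ^ 2 - M i ^ 2) ≤ τ := fun i =>
    ⟨sqrt_nonneg _, (sqrt_le_sqrt (by nlinarith)).trans_eq (sqrt_sq hτ.le)⟩
  rw [div_le_iff₀ (by positivity)]
  calc _ ≤ (1 - η) * _root_.enorm (fun i => τ - √(τ ^ 2 - M i ^ 2))
          + η * (τ * √(Fintype.card m)) := enorm_one_sub_mul_sub_le hβ hη0 hη1.le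
    _ ≤ (1 - η) * (τ * (ξ ^ 2 / (1 + √(1 - ξ ^ 2)))) + η * (τ * √(Fintype.card m)) := by
        gcongr
        exact enorm_sub_sqrt_sq_sub_sq_le hτ hξ hM
    _ = _ := by field_simp

end ProximityBound

theorem dotProduct_nonneg_of_newton_eqs {k l : Type*} [Fintype k] [Fintype l]
    {H : Matrix k k ℝ} (hH : H.PosSemidef) (Ω : Matrix k l ℝ) {c : ℝ} (hc : 0 ≤ c)
    {z : k → ℝ} {x y : l → ℝ} (h₁ : c • H *ᵥ z + Ω *ᵥ x = 0) (h₂ : Ωᵀ *ᵥ z + y = 0) :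
    0 ≤ x ⬝ᵥ y := by
  have hx : Ω *ᵥ x = -(c • H *ᵥ z) := eq_neg_of_add_eq_zero_right h₁
  have hy : y = -(Ωᵀ *ᵥ z) := eq_neg_of_add_eq_zero_right h₂
  have hxy : x ⬝ᵥ y = c * (z ⬝ᵥ H *ᵥ z) := by
    rw [hy, dotProduct_neg, dotProduct_mulVec, vecMul_transpose, hx, neg_dotProduct,
      smul_dotProduct, neg_neg, smul_eq_mul, dotProduct_comm]
  rw [hxy]
  exact mul_nonneg hc (hH.dotProduct_mulVec_nonneg z)

theorem sqrt_mul_mul_sqrt_div {x y : ℝ} (hx : 0 ≤ x) (hy : 0 < y) :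
    √(x * y) * √(x / y) = x := by
  rw [← sqrt_mul (mul_nonneg hx hy.le), show x * y * (x / y) = x * x by field_simp,
    sqrt_mul_self hx]

theorem sqrt_div_mul_sqrt_div_s2 {x y : ℝ} (hx : 0 < x) (hy : 0 < y) :
    √(x / y) * √(y / x) = 1 := by
  rw [← sqrt_mul (div_nonneg hx.le hy.le), show x / y * (y / x) = 1 by field_simp, sqrt_one]

/-- In the scaling `a = √(s/v)`, `b = √(v/s)`, `β = √(vs)` one has `v = β b` and `s = β a`,
so the left side is `v₊ s₊` and `a dv`, `b ds` are the scaled Newton directions. -/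
theorem newton_product_eq {a b β dv ds τ : ℝ} (hab : a * b = 1)
    (h : a * dv + b * ds = 2 * (τ - β)) :
    (β * b + dv) * (β * a + ds) = τ ^ 2 - ((a * dv - b * ds) / 2) ^ 2 := by
  linear_combination (β ^ 2 - dv * ds) * hab + ((β + (a * dv + b * ds) / 2 + τ) / 2) * h

theorem scaled_direction_sq_eq {a b β dv ds τ : ℝ} (hab : a * b = 1)
    (h : a * dv + b * ds = 2 * (τ - β)) :
    ((a * dv - b * ds) / 2) ^ 2 = (τ - β) ^ 2 - dv * ds := by
  linear_combination ((a * dv + b * ds + 2 * (τ - β)) / 4) * h - dv * ds * hab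

theorem newton_step_product_eq {v s dv ds τ : ℝ} (hv : 0 < v) (hs : 0 < s)
    (h : √(s / v) * dv + √(v / s) * ds = 2 * (τ - √(v * s))) :
    (v + dv) * (s + ds) = τ ^ 2 - ((√(s / v) * dv - √(v / s) * ds) / 2) ^ 2 := by
  have hv' : √(v * s) * √(v / s) = v := sqrt_mul_mul_sqrt_div hv.le hs
  have hs' : √(v * s) * √(s / v) = s := by
    rw [mul_comm v s]; exact sqrt_mul_mul_sqrt_div hs.le hv
  have := newton_product_eq (sqrt_div_mul_sqrt_div_s2 hs hv) h
  rwa [hv', hs'] at this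

theorem proximity_measure_after_full_newton_step_general
    (n : ℕ)
    (Htil : Matrix (Fin n) (Fin n) ℝ) (hH : Htil.PosSemidef)
    (lam : ℝ) (hlam : 0 < lam)
    (v s : Fin n ⊕ Fin n → ℝ) (hv : ∀ i, 0 < v i) (hs : ∀ i, 0 < s i)
    (τ : ℝ) (hτ : 0 < τ)
    (Δz : Fin n → ℝ) (Δv Δs : Fin n ⊕ Fin n → ℝ)
    (heq1 : (2 * lam) • Htil.mulVec Δz + (Omega n).mulVec Δv = 0)
    (heq2 : (Omega n)ᵀ.mulVec Δz + Δs = 0)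
    (heq3 : ∀ i, Real.sqrt (s i / v i) * Δv i + Real.sqrt (v i / s i) * Δs i
              = 2 * (τ - Real.sqrt (v i * s i)))
    (η : ℝ) (hη0 : 0 < η) (hη1 : η < 1)
    (ξ : ℝ) (hξdef : ξ = _root_.enorm (fun i => τ - Real.sqrt (v i * s i)) / τ)
    (hξ : ξ < 1) :
    _root_.enorm (fun i => (1 - η) * τ - Real.sqrt ((v i + Δv i) * (s i + Δs i)))
        / ((1 - η) * τ)
      ≤ ξ ^ 2 / (1 + Real.sqrt (1 - ξ ^ 2))
        + η * Real.sqrt (2 * n) / (1 - η) := by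
  set M : Fin n ⊕ Fin n → ℝ := fun i => (√(s i / v i) * Δv i - √(v i / s i) * Δs i) / 2
  have hξτ : _root_.enorm (fun i => τ - √(v i * s i)) = ξ * τ := by
    rw [hξdef]; field_simp
  have hξ0 : 0 ≤ ξ := hξdef ▸ div_nonneg (sqrt_nonneg _) hτ.le
  have hM : ∑ i, M i ^ 2 ≤ ξ ^ 2 * τ ^ 2 :=
    calc ∑ i, M i ^ 2 = ∑ i, (τ - √(v i * s i)) ^ 2 - Δv ⬝ᵥ Δs := by
          rw [dotProduct, ← sum_sub_distrib]
          exact sum_congr rfl fun i _ =>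
            scaled_direction_sq_eq (sqrt_div_mul_sqrt_div_s2 (hs i) (hv i)) (heq3 i)
      _ ≤ ξ ^ 2 * τ ^ 2 := by
          rw [← sq_enorm, hξτ]
          linarith [dotProduct_nonneg_of_newton_eqs hH (Omega n) (by positivity) heq1 heq2]
  have hprod : ∀ i, (v i + Δv i) * (s i + Δs i) = τ ^ 2 - M i ^ 2 := fun i =>
    newton_step_product_eq (hv i) (hs i) (heq3 i)
  simp_rw [hprod]
  have hcard : ((Fintype.card (Fin n ⊕ Fin n) : ℕ) : ℝ) = 2 * n := by
    rw [Fintype.card_sum, Fintype.card_fin]; push_cast; ring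
  rw [← hcard]
  exact proximity_le_of_sum_sq_le hτ hη0.le hη1 (by nlinarith) hM

/-- Decrease of the proximity measure after a full Newton step and an update
    τ₊ = (1 − η)τ (Lemma 5):
    ξ(β₊, τ₊) ≤ ξ²/(1 + √(1 − ξ²)) + η√(2n)/(1 − η). -/
theorem proximity_measure_after_full_newton_step
    (n : ℕ) (hn : 1 ≤ n)
    (Htil : Matrix (Fin n) (Fin n) ℝ) (hH : Htil.PosSemidef)
    (lam : ℝ) (hlam : 0 < lam)
    (v s : Fin n ⊕ Fin n → ℝ) (hv : ∀ i, 0 < v i) (hs : ∀ i, 0 < s i)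
    (τ : ℝ) (hτ : 0 < τ)
    (Δz : Fin n → ℝ) (Δv Δs : Fin n ⊕ Fin n → ℝ)
    (heq1 : (2 * lam) • Htil.mulVec Δz + (Omega n).mulVec Δv = 0)
    (heq2 : (Omega n)ᵀ.mulVec Δz + Δs = 0)
    (heq3 : ∀ i, Real.sqrt (s i / v i) * Δv i + Real.sqrt (v i / s i) * Δs i
              = 2 * (τ - Real.sqrt (v i * s i)))
    (η : ℝ) (hη0 : 0 < η) (hη1 : η < 1)
    (ξ : ℝ) (hξdef : ξ = _root_.enorm (fun i => τ - Real.sqrt (v i * s i)) / τ)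
    (hξ : ξ < 1) :
    _root_.enorm (fun i => (1 - η) * τ - Real.sqrt ((v i + Δv i) * (s i + Δs i)))
        / ((1 - η) * τ)
      ≤ ξ ^ 2 / (1 + Real.sqrt (1 - ξ ^ 2))
        + η * Real.sqrt (2 * n) / (1 - η) :=
  proximity_measure_after_full_newton_step_general n Htil hH lam hlam v s hv hs τ hτ Δz Δv Δs heq1
    heq2 heq3 η hη0 hη1 ξ hξdef hξ
end

section
/- Suppose v, s ∈ ℝ^{2n} have all components positive, τ > 0, and (Δz, Δv, Δs) is a Newton direction at (v, s, τ). Let v₊ = v + Δv, s₊ = s + Δs, β₊ = √(v₊s₊), and τ₊ = (1 − η)τ. If ξ(√(vs), τ) ≤ 1/√2 and η = (√2 − 1)/(√(2n) + √2 − 1), then ξ(β₊, τ₊) ≤ 1/√2. -/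
/-!
In the scaled directions `d_v = √(s/v) Δv`, `d_s = √(v/s) Δs` the Newton equations read
`d_v + d_s = 2(τe - β)`, while `d_v d_s = Δv Δs` has sum `Δvᵀ Δs = 2λ Δzᵀ H̃ Δz ≥ 0`.
Hence `w = d_v - d_s` satisfies `β₊² = τ²e - w²/4` and `‖w‖² ≤ ‖d_v + d_s‖² ≤ 2τ²`.
Bounding each `√(τ² - wᵢ²/4)` from below by the chord of this concave function over `[0, 2τ²]`
bounds `‖τ₊e - β₊‖²` by an affine function of `‖w‖²`, and `η` is chosen so that this bound
stays below `τ₊²/2` at both ends of `[0, 2τ²]`.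
-/

open Finset Matrix Real

/-- Euclidean norm of a real vector. -/
noncomputable def euclNorm {m : Type*} [Fintype m] (x : m → ℝ) : ℝ :=
  Real.sqrt (∑ i, (x i) ^ 2)

lemma dotProduct_nonneg_of_saddle_system {m k : Type*} [Fintype m] [Fintype k]
    {H : Matrix m m ℝ} (hH : H.PosSemidef) {μ : ℝ} (hμ : 0 ≤ μ) {A : Matrix m k ℝ}
    {z : m → ℝ} {x y : k → ℝ} (h₁ : μ • H *ᵥ z + A *ᵥ x = 0) (h₂ : Aᵀ *ᵥ z + y = 0) :
    0 ≤ x ⬝ᵥ y := by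
  rw [eq_neg_of_add_eq_zero_right h₂, dotProduct_neg, dotProduct_mulVec, vecMul_transpose,
    eq_neg_of_add_eq_zero_right h₁, neg_dotProduct, neg_neg, smul_dotProduct, dotProduct_comm]
  exact smul_nonneg hμ (hH.dotProduct_mulVec_nonneg z)

lemma sqrt_div_mul_sqrt_div_s3 {v s : ℝ} (hv : 0 < v) (hs : 0 < s) : √(s / v) * √(v / s) = 1 := by
  rw [← sqrt_mul (by positivity), div_mul_div_cancel₀ hv.ne', div_self hs.ne', sqrt_one]

lemma sqrt_mul_mul_sqrt_div_s3 {v s : ℝ} (hv : 0 ≤ v) (hs : 0 < s) : √(v * s) * √(v / s) = v := by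
  rw [← sqrt_mul (by positivity), show v * s * (v / s) = v * v by field_simp, sqrt_mul_self hv]

section NewtonStep

variable {v s τ Δv Δs : ℝ}

lemma newton_step_mul_eq (hv : 0 < v) (hs : 0 < s)
    (h : √(s / v) * Δv + √(v / s) * Δs = 2 * (τ - √(v * s))) :
    (v + Δv) * (s + Δs) = τ ^ 2 - (√(s / v) * Δv - √(v / s) * Δs) ^ 2 / 4 := by
  have hsv := sqrt_div_mul_sqrt_div_s3 hv hs
  have hv' := sqrt_mul_mul_sqrt_div_s3 hv.le hs
  have hs' : √(v * s) * √(s / v) = s := by rw [mul_comm v]; exact sqrt_mul_mul_sqrt_div_s3 hs.le hv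
  have hβ : √(v * s) ^ 2 = v * s := sq_sqrt (by positivity)
  linear_combination -hβ - Δs * hv' - Δv * hs' - (Δv * Δs) * hsv
    + ((√(s / v) * Δv + √(v / s) * Δs) / 4 + √(v * s) / 2 + τ / 2) * h

lemma newton_step_scaled_diff_sq (hv : 0 < v) (hs : 0 < s)
    (h : √(s / v) * Δv + √(v / s) * Δs = 2 * (τ - √(v * s))) :
    (√(s / v) * Δv - √(v / s) * Δs) ^ 2 = 4 * (τ - √(v * s)) ^ 2 - 4 * (Δv * Δs) := by
  linear_combination -4 * (Δv * Δs) * sqrt_div_mul_sqrt_div_s3 hv hs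
    + (√(s / v) * Δv + √(v / s) * Δs + 2 * (τ - √(v * s))) * h

end NewtonStep

/-- The left side is the chord of the concave function `x ↦ 2τ√(τ² - x/4)` over `[0, 2τ²]`. -/
lemma two_mul_sq_sub_le_two_mul_mul_sqrt {τ x : ℝ} (hτ : 0 ≤ τ) (hx : 0 ≤ x) (hxτ : x ≤ 2 * τ ^ 2) :
    2 * τ ^ 2 - (2 - √2) / 2 * x ≤ 2 * τ * √(τ ^ 2 - x / 4) := by
  have h2 : √2 ^ 2 = 2 := sq_sqrt zero_le_two
  rw [← sqrt_sq (by positivity : 0 ≤ 2 * τ), ← sqrt_mul (sq_nonneg _)]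
  apply le_sqrt_of_sq_le
  have hk : (2 * τ) ^ 2 * (τ ^ 2 - x / 4) - (2 * τ ^ 2 - (2 - √2) / 2 * x) ^ 2
      = ((2 - √2) / 2) ^ 2 * x * (2 * τ ^ 2 - x) := by
    linear_combination (-(x * τ ^ 2) / 2) * h2
  nlinarith [mul_nonneg (mul_nonneg (sq_nonneg ((2 - √2) / 2)) hx) (sub_nonneg.2 hxτ)]

lemma sq_mul_sub_sqrt_le {τ q x : ℝ} (hτ : 0 ≤ τ) (hq : 0 ≤ q) (hx : 0 ≤ x)
    (hxτ : x ≤ 2 * τ ^ 2) :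
    (q * τ - √(τ ^ 2 - x / 4)) ^ 2 ≤ (1 - q) ^ 2 * τ ^ 2 + (q * ((2 - √2) / 2) - 1 / 4) * x := by
  have hr : √(τ ^ 2 - x / 4) ^ 2 = τ ^ 2 - x / 4 := sq_sqrt (by linarith)
  nlinarith [mul_le_mul_of_nonneg_left (two_mul_sq_sub_le_two_mul_mul_sqrt hτ hx hxτ) hq]

lemma sum_sq_mul_sub_sqrt_le {ι : Type*} [Fintype ι] {τ q : ℝ} (hτ : 0 ≤ τ) (hq : 0 ≤ q)
    {x : ι → ℝ} (hx : ∀ i, 0 ≤ x i) (hxτ : ∀ i, x i ≤ 2 * τ ^ 2) :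
    ∑ i, (q * τ - √(τ ^ 2 - x i / 4)) ^ 2
      ≤ Fintype.card ι * ((1 - q) ^ 2 * τ ^ 2) + (q * ((2 - √2) / 2) - 1 / 4) * ∑ i, x i := by
  calc ∑ i, (q * τ - √(τ ^ 2 - x i / 4)) ^ 2
      ≤ ∑ i, ((1 - q) ^ 2 * τ ^ 2 + (q * ((2 - √2) / 2) - 1 / 4) * x i) :=
        sum_le_sum fun i _ ↦ sq_mul_sub_sqrt_le hτ hq (hx i) (hxτ i)
    _ = _ := by rw [sum_add_distrib, sum_const, card_univ, nsmul_eq_mul, mul_sum]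

lemma newton_step_size_bound {a η τ X : ℝ} (ha : 0 ≤ a) (hη : η = (√2 - 1) / (a + √2 - 1))
    (hX : 0 ≤ X) (hXτ : X ≤ 2 * τ ^ 2) :
    a ^ 2 * (η ^ 2 * τ ^ 2) + ((1 - η) * ((2 - √2) / 2) - 1 / 4) * X ≤ ((1 - η) * τ) ^ 2 / 2 := by
  have h2 : √2 ^ 2 = 2 := sq_sqrt zero_le_two
  have h2lt : √2 < 3 / 2 := by nlinarith [sqrt_nonneg 2]
  have h2gt : 1 < √2 := by nlinarith [sqrt_nonneg 2]
  set c := √2 - 1 with hc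
  have hac : 0 < a + c := by linarith
  have hηc : η * (a + c) = c := by rw [hη, show a + √2 - 1 = a + c by rw [hc]; ring]; field_simp
  have hqa : (1 - η) * (a + c) = a := by linear_combination -hηc
  have hk : (2 - √2) / 2 = (1 - c) / 2 := by ring
  rw [hk]
  suffices h : (a ^ 2 * (η ^ 2 * τ ^ 2) + ((1 - η) * ((1 - c) / 2) - 1 / 4) * X) * (a + c) ^ 2
      ≤ ((1 - η) * τ) ^ 2 / 2 * (a + c) ^ 2 from le_of_mul_le_mul_right h (by positivity)
  have e : (a ^ 2 * (η ^ 2 * τ ^ 2) + ((1 - η) * ((1 - c) / 2) - 1 / 4) * X) * (a + c) ^ 2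
      = a ^ 2 * c ^ 2 * τ ^ 2 + (a * (a + c) * (1 - c) / 2 - (a + c) ^ 2 / 4) * X := by
    linear_combination (a ^ 2 * τ ^ 2 * (η * (a + c) + c)) * hηc
      + (X * (1 - c) / 2 * (a + c)) * hqa
  rw [e, show ((1 - η) * τ) ^ 2 / 2 * (a + c) ^ 2 = a ^ 2 * τ ^ 2 / 2 by
    linear_combination (τ ^ 2 * ((1 - η) * (a + c) + a) / 2) * hqa]
  have hc0 : 0 ≤ c := by linarith
  have hc1 : c ≤ 1 := by linarith
  have hc2 : c ^ 2 ≤ 1 / 2 := by nlinarith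
  -- The goal is affine in `X`: combine its cases `X = 0` and `X = 2τ²`.
  nlinarith [mul_nonneg (mul_nonneg (sq_nonneg a) (sub_nonneg.2 hc2)) (sub_nonneg.2 hXτ),
    mul_nonneg (mul_nonneg (mul_nonneg (sq_nonneg a) hc0) (sub_nonneg.2 hc1)) hX,
    mul_nonneg (mul_nonneg ha (sq_nonneg c)) hX, mul_nonneg (sq_nonneg c) hX]

lemma sum_sq_full_step_le {ι : Type*} [Fintype ι] {τ η : ℝ} (hτ : 0 ≤ τ)
    (hη : η = (√2 - 1) / (√(Fintype.card ι) + √2 - 1)) {x : ι → ℝ} (hx : ∀ i, 0 ≤ x i)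
    (hxτ : ∑ i, x i ≤ 2 * τ ^ 2) :
    ∑ i, ((1 - η) * τ - √(τ ^ 2 - x i / 4)) ^ 2 ≤ ((1 - η) * τ) ^ 2 / 2 := by
  have ha := sqrt_nonneg (Fintype.card ι : ℝ)
  have hsqrt2 : 1 ≤ √2 := one_le_sqrt.2 one_le_two
  have hq : 0 ≤ 1 - η := by
    rw [hη, sub_nonneg]
    exact div_le_one_of_le₀ (by linarith) (by linarith)
  calc ∑ i, ((1 - η) * τ - √(τ ^ 2 - x i / 4)) ^ 2
      ≤ Fintype.card ι * ((1 - (1 - η)) ^ 2 * τ ^ 2)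
          + ((1 - η) * ((2 - √2) / 2) - 1 / 4) * ∑ i, x i :=
        sum_sq_mul_sub_sqrt_le hτ hq hx fun i ↦
          (single_le_sum (fun j _ ↦ hx j) (mem_univ i)).trans hxτ
    _ = √(Fintype.card ι) ^ 2 * (η ^ 2 * τ ^ 2)
          + ((1 - η) * ((2 - √2) / 2) - 1 / 4) * ∑ i, x i := by
        rw [sq_sqrt (Nat.cast_nonneg _), sub_sub_cancel]
    _ ≤ ((1 - η) * τ) ^ 2 / 2 := newton_step_size_bound ha hη (sum_nonneg fun i _ ↦ hx i) hxτ

lemma one_div_sqrt_two_mul_sq (t : ℝ) : (1 / √2 * t) ^ 2 = t ^ 2 / 2 := by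
  rw [mul_pow, div_pow, sq_sqrt zero_le_two]
  ring

lemma sum_sq_le_of_euclNorm_div_le {ι : Type*} [Fintype ι] {x : ι → ℝ} {t : ℝ} (ht : 0 < t)
    (h : euclNorm x / t ≤ 1 / √2) : ∑ i, x i ^ 2 ≤ t ^ 2 / 2 := by
  rw [div_le_iff₀ ht, euclNorm, sqrt_le_iff, one_div_sqrt_two_mul_sq] at h
  exact h.2

lemma euclNorm_div_le_of_sum_sq_le {ι : Type*} [Fintype ι] {x : ι → ℝ} {t : ℝ}
    (h : ∑ i, x i ^ 2 ≤ t ^ 2 / 2) : euclNorm x / t ≤ 1 / √2 := by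
  rcases le_or_gt t 0 with ht | ht
  · exact (div_nonpos_of_nonneg_of_nonpos (sqrt_nonneg _) ht).trans (by positivity)
  refine div_le_of_le_mul₀ ht.le (by positivity) (sqrt_le_iff.2 ⟨by positivity, ?_⟩)
  rwa [one_div_sqrt_two_mul_sq]

theorem proximity_measure_invariant_general
    (n : ℕ)
    (Htil : Matrix (Fin n) (Fin n) ℝ) (hH : Htil.PosSemidef)
    (lam : ℝ) (hlam : 0 < lam)
    (v s : Fin n ⊕ Fin n → ℝ) (hv : ∀ i, 0 < v i) (hs : ∀ i, 0 < s i)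
    (τ : ℝ) (hτ : 0 < τ)
    (Δz : Fin n → ℝ) (Δv Δs : Fin n ⊕ Fin n → ℝ)
    (heq1 : (2 * lam) • Htil.mulVec Δz + (Omega n).mulVec Δv = 0)
    (heq2 : (Omega n)ᵀ.mulVec Δz + Δs = 0)
    (heq3 : ∀ i, Real.sqrt (s i / v i) * Δv i + Real.sqrt (v i / s i) * Δs i
              = 2 * (τ - Real.sqrt (v i * s i)))
    (η : ℝ) (hη : η = (Real.sqrt 2 - 1) / (Real.sqrt (2 * n) + Real.sqrt 2 - 1))
    (hξ : euclNorm (fun i => τ - Real.sqrt (v i * s i)) / τ ≤ 1 / Real.sqrt 2) :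
    euclNorm (fun i => (1 - η) * τ - Real.sqrt ((v i + Δv i) * (s i + Δs i)))
        / ((1 - η) * τ) ≤ 1 / Real.sqrt 2 := by
  set w := fun i ↦ √(s i / v i) * Δv i - √(v i / s i) * Δs i
  have hw : ∑ i, w i ^ 2 ≤ 2 * τ ^ 2 := by
    have hprox := sum_sq_le_of_euclNorm_div_le hτ hξ
    have hdot := dotProduct_nonneg_of_saddle_system hH (by positivity) heq1 heq2
    calc ∑ i, w i ^ 2 = 4 * ∑ i, (τ - √(v i * s i)) ^ 2 - 4 * Δv ⬝ᵥ Δs := by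
          simp only [w, newton_step_scaled_diff_sq (hv _) (hs _) (heq3 _), sum_sub_distrib,
            ← mul_sum, dotProduct]
      _ ≤ 2 * τ ^ 2 := by linarith
  have hcard : (Fintype.card (Fin n ⊕ Fin n) : ℝ) = 2 * n := by
    rw [Fintype.card_sum, Fintype.card_fin]
    push_cast
    ring
  apply euclNorm_div_le_of_sum_sq_le
  simp only [newton_step_mul_eq (hv _) (hs _) (heq3 _)]
  exact sum_sq_full_step_le hτ.le (hcard ▸ hη) (fun i ↦ sq_nonneg (w i)) hw

/-- Invariance of the neighborhood ξ ≤ 1/√2 under a full Newton step with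
    η = (√2 − 1)/(√(2n) + √2 − 1) (Lemma 5, second part). -/
theorem proximity_measure_invariant
    (n : ℕ) (hn : 1 ≤ n)
    (Htil : Matrix (Fin n) (Fin n) ℝ) (hH : Htil.PosSemidef)
    (lam : ℝ) (hlam : 0 < lam)
    (v s : Fin n ⊕ Fin n → ℝ) (hv : ∀ i, 0 < v i) (hs : ∀ i, 0 < s i)
    (τ : ℝ) (hτ : 0 < τ)
    (Δz : Fin n → ℝ) (Δv Δs : Fin n ⊕ Fin n → ℝ)
    (heq1 : (2 * lam) • Htil.mulVec Δz + (Omega n).mulVec Δv = 0)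
    (heq2 : (Omega n)ᵀ.mulVec Δz + Δs = 0)
    (heq3 : ∀ i, Real.sqrt (s i / v i) * Δv i + Real.sqrt (v i / s i) * Δs i
              = 2 * (τ - Real.sqrt (v i * s i)))
    (η : ℝ) (hη : η = (Real.sqrt 2 - 1) / (Real.sqrt (2 * n) + Real.sqrt 2 - 1))
    (hξ : euclNorm (fun i => τ - Real.sqrt (v i * s i)) / τ ≤ 1 / Real.sqrt 2) :
    euclNorm (fun i => (1 - η) * τ - Real.sqrt ((v i + Δv i) * (s i + Δs i)))
        / ((1 - η) * τ) ≤ 1 / Real.sqrt 2 :=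
  proximity_measure_invariant_general n Htil hH lam hlam v s hv hs τ hτ Δz Δv Δs heq1 heq2 heq3 η hη
    hξ
end

section
/- Let n ≥ 1 be an integer, let h̃ ∈ ℝⁿ satisfy ‖h̃‖∞ = 1, and set λ = 1/√(n+1). Define the initial point v⁰ = col(1 − λh̃, 1 + λh̃) ∈ ℝ^{2n} and s⁰ = e ∈ ℝ^{2n}, and β⁰ = √(v⁰s⁰). Then the initial proximity measure satisfies ξ(β⁰, 1) = ‖e − √(v⁰)‖ ≤ 1/√2. -/
/-! With u = λh̃ᵢ, the two coordinates of √v⁰ paired by the index i are √(1 - u) and √(1 + u),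
and since their squares sum to 2 and their product is √(1 - u²),
`(1 - √(1 - u))² + (1 - √(1 + u))² = 4 - 2(√(1 - u) + √(1 + u)) ≤ u²/2 + u⁴/2`.
As u² ≤ λ² = 1/(n+1), summing over the n pairs gives
`‖e - √v⁰‖² ≤ n (n + 2) / (2 (n + 1)²) ≤ 1/2`. -/

open Finset Real

lemma one_sub_half_sub_sq_div_four_le_sqrt_one_sub {t : ℝ} (ht₀ : 0 ≤ t) (ht : t ≤ 1 / 2) :
    1 - t / 2 - t ^ 2 / 4 ≤ √(1 - t) := by
  apply Real.le_sqrt_of_sq_le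
  nlinarith [mul_nonneg (mul_nonneg ht₀ ht₀) ht₀, mul_nonneg (mul_nonneg ht₀ ht₀) (sub_nonneg.2 ht)]

lemma two_sub_le_sqrt_one_sub_add_sqrt_one_add {u : ℝ} (hu : u ^ 2 ≤ 1 / 2) :
    2 - u ^ 2 / 4 - u ^ 4 / 4 ≤ √(1 - u) + √(1 + u) := by
  have hsub : 0 ≤ 1 - u := by nlinarith
  have hadd : 0 ≤ 1 + u := by nlinarith
  have hsq : (√(1 - u) + √(1 + u)) ^ 2 = 2 + 2 * √(1 - u ^ 2) := by
    rw [add_sq, sq_sqrt hsub, sq_sqrt hadd, mul_assoc, ← sqrt_mul hsub]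
    ring_nf
  have hroot := one_sub_half_sub_sq_div_four_le_sqrt_one_sub (sq_nonneg u) hu
  refine le_of_pow_le_pow_left₀ two_ne_zero (by positivity) ?_
  rw [hsq]
  nlinarith [sq_nonneg u, pow_le_pow_left₀ (sq_nonneg u) hu 2]

lemma sq_one_sub_sqrt_one_sub_add_sq_one_sub_sqrt_one_add_le {u : ℝ} (hu : u ^ 2 ≤ 1 / 2) :
    (1 - √(1 - u)) ^ 2 + (1 - √(1 + u)) ^ 2 ≤ u ^ 2 / 2 + u ^ 4 / 2 := by
  have hsub : (√(1 - u)) ^ 2 = 1 - u := sq_sqrt (by nlinarith)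
  have hadd : (√(1 + u)) ^ 2 = 1 + u := sq_sqrt (by nlinarith)
  linear_combination hsub + hadd + 2 * two_sub_le_sqrt_one_sub_add_sqrt_one_add hu

lemma sum_sq_one_sub_sqrt_sumElim_le {ι : Type*} [Fintype ι] (u : ι → ℝ) {μ : ℝ}
    (hu : ∀ i, u i ^ 2 ≤ μ) (hμ : μ ≤ 1 / 2) :
    ∑ j, (1 - √(Sum.elim (fun i => 1 - u i) (fun i => 1 + u i) j)) ^ 2
      ≤ Fintype.card ι * (μ / 2 + μ ^ 2 / 2) := by
  rw [Fintype.sum_sum_type, ← sum_add_distrib, ← nsmul_eq_mul, ← card_univ, ← sum_const]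
  refine sum_le_sum fun i _ => ?_
  have hpair := sq_one_sub_sqrt_one_sub_add_sq_one_sub_sqrt_one_add_le ((hu i).trans hμ)
  have hsq : (u i ^ 2) ^ 2 ≤ μ ^ 2 := pow_le_pow_left₀ (sq_nonneg _) (hu i) 2
  simp only [Sum.elim_inl, Sum.elim_inr]
  linarith [hu i]

/-- The initial point v⁰ = col(1 − λh̃, 1 + λh̃), s⁰ = e with λ = 1/√(n+1)
    satisfies ξ(β⁰, 1) = ‖e − √(v⁰)‖ ≤ 1/√2 (Lemma 6). -/
theorem initial_proximity_measure
    (n : ℕ) (hn : 1 ≤ n)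
    (h : Fin n → ℝ) (hinf : (⨆ i, |h i|) = 1)
    (lam : ℝ) (hlam : lam = 1 / Real.sqrt (n + 1))
    (v0 : Fin n ⊕ Fin n → ℝ)
    (hv0 : v0 = Sum.elim (fun i => 1 - lam * h i) (fun i => 1 + lam * h i))
    (s0 : Fin n ⊕ Fin n → ℝ) (hs0 : s0 = fun _ => 1) :
    _root_.enorm (fun j => 1 - Real.sqrt (v0 j * s0 j)) / 1
        = _root_.enorm (fun j => 1 - Real.sqrt (v0 j)) ∧
    _root_.enorm (fun j => 1 - Real.sqrt (v0 j)) ≤ 1 / Real.sqrt 2 := by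
  subst hv0 hs0
  refine ⟨by simp, ?_⟩
  have hn' : (1 : ℝ) ≤ n := by exact_mod_cast hn
  have hlam_sq : lam ^ 2 = 1 / (n + 1) := by
    rw [hlam, div_pow, one_pow, sq_sqrt (by positivity)]
  have hu : ∀ i, (lam * h i) ^ 2 ≤ lam ^ 2 := fun i => by
    have habs : |h i| ≤ 1 := hinf ▸ le_ciSup (Set.finite_range fun i => |h i|).bddAbove i
    rw [mul_pow]
    exact mul_le_of_le_one_right (sq_nonneg _) (sq_le_one_iff_abs_le_one _ |>.2 habs)
  have hlam_half : lam ^ 2 ≤ 1 / 2 := by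
    rw [hlam_sq]; gcongr; linarith
  rw [one_div, ← sqrt_inv, _root_.enorm]
  refine sqrt_le_sqrt ((sum_sq_one_sub_sqrt_sumElim_le _ hu hlam_half).trans ?_)
  rw [Fintype.card_fin, hlam_sq]
  field_simp
  nlinarith
end

section
/- Let n ≥ 1, λ > 0, τ > 0, H̃ ∈ ℝ^{n×n}, and let γ, θ, φ, ψ ∈ ℝⁿ have all components positive; set v = col(γ, θ) and s = col(φ, ψ) in ℝ^{2n}. Suppose Δz ∈ ℝⁿ solves the compact Newton system (2λH̃ + diag(γ/φ) + diag(θ/ψ))Δz = 2(√(θ/ψ)τe − √(γ/φ)τe + γ − θ), and define Δγ = (γ/φ)Δz + 2(√(γ/φ)τe − γ), Δθ = −(θ/ψ)Δz + 2(√(θ/ψ)τe − θ), Δφ = −Δz, Δψ = Δz. Then (Δz, Δv, Δs) with Δv = col(Δγ, Δθ) and Δs = col(Δφ, Δψ) satisfies the full Newton system: 2λH̃Δz + ΩΔv = 0, ΩᵀΔz + Δs = 0, and √(s/v)Δv + √(v/s)Δs = 2(τe − √(vs)), where Ω = [I, −I] ∈ ℝ^{n×2n}. -/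
open Finset Matrix Real

lemma Omega_mulVec_sumElim {n : ℕ} (a b : Fin n → ℝ) :
    (Omega n).mulVec (Sum.elim a b) = a - b := by
  rw [Omega, fromCols_mulVec_sumElim, one_mulVec, neg_mulVec, one_mulVec, sub_eq_add_neg]

lemma Omega_transpose_mulVec {n : ℕ} (z : Fin n → ℝ) :
    (Omega n)ᵀ.mulVec z = Sum.elim z (-z) := by
  rw [Omega, transpose_fromCols, fromRows_mulVec, transpose_one, transpose_neg, transpose_one,
    one_mulVec, neg_mulVec, one_mulVec]

/-- Writing `r = √(a/b)`, one has `√(b/a) = r⁻¹` and `√(ab) = r b`, so the left side collapses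
to `2t − 2a/r = 2t − 2rb`. -/
lemma sqrt_div_mul_add_sqrt_div_mul_eq {a b t w Δa Δb : ℝ} (ha : 0 < a) (hb : 0 < b)
    (hΔa : Δa = a / b * w + 2 * (√(a / b) * t - a)) (hΔb : Δb = -w) :
    √(b / a) * Δa + √(a / b) * Δb = 2 * (t - √(a * b)) := by
  set r := √(a / b) with hr
  have hr_pos : 0 < r := sqrt_pos.2 (div_pos ha hb)
  have hr_sq : r ^ 2 = a / b := sq_sqrt (div_pos ha hb).le
  have hr_inv : √(b / a) = r⁻¹ := by rw [hr, ← sqrt_inv, inv_div]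
  have hab : √(a * b) = r * b := by
    have hab_sq : a * b = a / b * b ^ 2 := by field_simp
    rw [hab_sq, sqrt_mul (div_pos ha hb).le, sqrt_sq hb.le]
  have ha_eq : a = r ^ 2 * b := by rw [hr_sq]; field_simp
  rw [hr_inv, hab, hΔa, hΔb, ← hr_sq, ha_eq]
  field_simp
  ring

theorem compact_newton_solves_full_system_general
    (n : ℕ)
    (lam : ℝ) (τ : ℝ)
    (Htil : Matrix (Fin n) (Fin n) ℝ)
    (γ θ φ ψ : Fin n → ℝ)
    (hγ : ∀ i, 0 < γ i) (hθ : ∀ i, 0 < θ i)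
    (hφ : ∀ i, 0 < φ i) (hψ : ∀ i, 0 < ψ i)
    (v s : Fin n ⊕ Fin n → ℝ)
    (hv : v = Sum.elim γ θ) (hs : s = Sum.elim φ ψ)
    (Δz : Fin n → ℝ)
    (hΔz : ((2 * lam) • Htil + Matrix.diagonal (fun i => γ i / φ i)
              + Matrix.diagonal (fun i => θ i / ψ i)).mulVec Δz
           = fun i => 2 * (Real.sqrt (θ i / ψ i) * τ - Real.sqrt (γ i / φ i) * τ
                            + γ i - θ i))
    (Δγ Δθ Δφ Δψ : Fin n → ℝ)
    (hΔγ : Δγ = fun i => (γ i / φ i) * Δz i + 2 * (Real.sqrt (γ i / φ i) * τ - γ i))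
    (hΔθ : Δθ = fun i => -(θ i / ψ i) * Δz i + 2 * (Real.sqrt (θ i / ψ i) * τ - θ i))
    (hΔφ : Δφ = fun i => -Δz i)
    (hΔψ : Δψ = fun i => Δz i)
    (Δv Δs : Fin n ⊕ Fin n → ℝ)
    (hΔv : Δv = Sum.elim Δγ Δθ) (hΔs : Δs = Sum.elim Δφ Δψ) :
    ((2 * lam) • Htil.mulVec Δz + (Omega n).mulVec Δv = 0) ∧
    ((Omega n)ᵀ.mulVec Δz + Δs = 0) ∧
    (∀ i, Real.sqrt (s i / v i) * Δv i + Real.sqrt (v i / s i) * Δs i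
            = 2 * (τ - Real.sqrt (v i * s i))) := by
  subst hv hs hΔv hΔs
  refine ⟨?_, ?_, ?_⟩
  · rw [Omega_mulVec_sumElim]
    funext i
    have hi := congrFun hΔz i
    simp only [add_mulVec, smul_mulVec, mulVec_diagonal, Pi.add_apply, Pi.smul_apply,
      smul_eq_mul] at hi
    simp only [hΔγ, hΔθ, Pi.add_apply, Pi.sub_apply, Pi.smul_apply, smul_eq_mul, Pi.zero_apply]
    linarith
  · rw [Omega_transpose_mulVec, hΔφ, hΔψ]
    ext (i | i) <;> simp
  · rintro (i | i) <;> simp only [Sum.elim_inl, Sum.elim_inr]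
    · exact sqrt_div_mul_add_sqrt_div_mul_eq (hγ i) (hφ i) (w := Δz i) (by simp [hΔγ]) (by simp [hΔφ])
    · exact sqrt_div_mul_add_sqrt_div_mul_eq (hθ i) (hψ i) (w := -Δz i)
        (by simp only [hΔθ]; ring) (by simp [hΔψ])

/-- A solution of the compact Newton system, together with the back-substitution
    formulas for (Δγ, Δθ, Δφ, Δψ), solves the full Newton system. -/
theorem compact_newton_solves_full_system
    (n : ℕ) (hn : 1 ≤ n)
    (lam : ℝ) (hlam : 0 < lam) (τ : ℝ) (hτ : 0 < τ)
    (Htil : Matrix (Fin n) (Fin n) ℝ)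
    (γ θ φ ψ : Fin n → ℝ)
    (hγ : ∀ i, 0 < γ i) (hθ : ∀ i, 0 < θ i)
    (hφ : ∀ i, 0 < φ i) (hψ : ∀ i, 0 < ψ i)
    (v s : Fin n ⊕ Fin n → ℝ)
    (hv : v = Sum.elim γ θ) (hs : s = Sum.elim φ ψ)
    (Δz : Fin n → ℝ)
    (hΔz : ((2 * lam) • Htil + Matrix.diagonal (fun i => γ i / φ i)
              + Matrix.diagonal (fun i => θ i / ψ i)).mulVec Δz
           = fun i => 2 * (Real.sqrt (θ i / ψ i) * τ - Real.sqrt (γ i / φ i) * τ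
                            + γ i - θ i))
    (Δγ Δθ Δφ Δψ : Fin n → ℝ)
    (hΔγ : Δγ = fun i => (γ i / φ i) * Δz i + 2 * (Real.sqrt (γ i / φ i) * τ - γ i))
    (hΔθ : Δθ = fun i => -(θ i / ψ i) * Δz i + 2 * (Real.sqrt (θ i / ψ i) * τ - θ i))
    (hΔφ : Δφ = fun i => -Δz i)
    (hΔψ : Δψ = fun i => Δz i)
    (Δv Δs : Fin n ⊕ Fin n → ℝ)
    (hΔv : Δv = Sum.elim Δγ Δθ) (hΔs : Δs = Sum.elim Δφ Δψ) :
    ((2 * lam) • Htil.mulVec Δz + (Omega n).mulVec Δv = 0) ∧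
    ((Omega n)ᵀ.mulVec Δz + Δs = 0) ∧
    (∀ i, Real.sqrt (s i / v i) * Δv i + Real.sqrt (v i / s i) * Δs i
            = 2 * (τ - Real.sqrt (v i * s i))) :=
  compact_newton_solves_full_system_general n lam τ Htil γ θ φ ψ hγ hθ hφ hψ v s hv hs Δz hΔz Δγ Δθ
    Δφ Δψ hΔγ hΔθ hΔφ hΔψ Δv Δs hΔv hΔs
end
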